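/- arXiv:2501.05338 — 2 statements merged into one kernel-verified Lean document; each statement's English description precedes it below -/
import Mathlib

section
/- Suppose the threshold shifts are a common constant: Δ_{γ,j} = Δ_γ for all j = 1,…,J−1. Assume a single crossing of the ordinal CDFs at category m (1 ≤ m ≤ J−2): F_X(j) < F_Y(j) for 1 ≤ j ≤ m and F_X(j) > F_Y(j) for m < j ≤ J−1. Define T_1 = ⋃_{j=1}^{m} (F_X(j), F_Y(j)] and T_2 = ⋃_{j=m+1}^{J−1} (F_Y(j), F_X(j)]. Then Q_X*(τ_2) − Q_X*(τ_1) < Q_Y*(τ_2) − Q_Y*(τ_1) for every τ_1 ∈ T_1 and every τ_2 ∈ T_2. -/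
open MeasureTheory Set

/-- CDF of a Borel (probability) measure on ℝ: `F(x) = μ((-∞, x])`. -/
noncomputable def cdfOf (μ : MeasureTheory.Measure ℝ) (x : ℝ) : ℝ := (μ (Set.Iic x)).toReal

/-- Quantile function with values in the extended reals:
`Q(τ) = inf {x ∈ ℝ : F(x) ≥ τ}`, with the convention `inf ∅ = +∞`. -/
noncomputable def quantileE (μ : MeasureTheory.Measure ℝ) (τ : ℝ) : EReal :=
  sInf {y : EReal | ∃ x : ℝ, y = (x : EReal) ∧ τ ≤ cdfOf μ x}

lemma cdfOf_mono (μ : MeasureTheory.Measure ℝ) [IsFiniteMeasure μ] {x y : ℝ} (h : x ≤ y) :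
    cdfOf μ x ≤ cdfOf μ y :=
  ENNReal.toReal_mono (measure_ne_top _ _) (measure_mono (Set.Iic_subset_Iic.2 h))

lemma quantileE_le (μ : MeasureTheory.Measure ℝ) {τ x : ℝ} (h : τ ≤ cdfOf μ x) :
    quantileE μ τ ≤ (x : EReal) :=
  sInf_le ⟨x, rfl, h⟩

lemma cdfOf_eq_cdf (μ : MeasureTheory.Measure ℝ) [IsProbabilityMeasure μ] :
    cdfOf μ = ProbabilityTheory.cdf μ := by
  ext x
  rw [ProbabilityTheory.cdf_eq_real]
  rfl

lemma lt_quantileE (μ : MeasureTheory.Measure ℝ) [IsProbabilityMeasure μ] {τ x : ℝ}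
    (h : cdfOf μ x < τ) : (x : EReal) < quantileE μ τ := by
  have hrc : ContinuousWithinAt (cdfOf μ) (Set.Ici x) x := by
    rw [cdfOf_eq_cdf μ]
    exact (ProbabilityTheory.cdf μ).right_continuous x
  have hmem : (cdfOf μ) ⁻¹' (Set.Iio τ) ∈ nhdsWithin x (Set.Ici x) :=
    hrc (Iio_mem_nhds h)
  obtain ⟨u, hu, hsub⟩ := mem_nhdsGE_iff_exists_Ico_subset.1 hmem
  have hu' : x < u := hu
  have hlb : ∀ y ∈ {y : EReal | ∃ z : ℝ, y = (z : EReal) ∧ τ ≤ cdfOf μ z}, (u : EReal) ≤ y := by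
    rintro y ⟨z, rfl, hz⟩
    rw [EReal.coe_le_coe_iff]
    by_contra hzu
    push_neg at hzu
    rcases le_or_gt x z with hxz | hxz
    · exact absurd (hsub ⟨hxz, hzu⟩) (not_lt.2 hz)
    · exact absurd hz (not_le.2 (lt_of_le_of_lt (cdfOf_mono μ hxz.le) h))
  calc (x : EReal) < (u : EReal) := EReal.coe_lt_coe_iff.2 hu'
    _ ≤ quantileE μ τ := le_sInf hlb

/-- Corollary 1 of the paper: under a common-constant threshold shift
and a single crossing of the ordinal CDFs at category `m`, every interquantile range with
`τ₁ ∈ T₁ = ⋃_{j=1}^{m} (F_X(j), F_Y(j)]` and `τ₂ ∈ T₂ = ⋃_{j=m+1}^{J-1} (F_Y(j), F_X(j)]`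
is smaller for the latent `X*` distribution than for the latent `Y*` distribution. -/
theorem stmt1
    (μX μY : MeasureTheory.Measure ℝ)
    [IsProbabilityMeasure μX] [IsProbabilityMeasure μY]
    (J : ℕ) (hJ : 2 ≤ J)
    (γ : ℕ → ℝ) (hγ : ∀ j k, 1 ≤ j → j < k → k ≤ J - 1 → γ j < γ k)
    (Δ : ℕ → ℝ) (Δγ : ℝ) (hΔ : ∀ j, 1 ≤ j → j ≤ J - 1 → Δ j = Δγ)
    (FX FY : ℕ → ℝ)
    (hFX : ∀ j, 1 ≤ j → j ≤ J - 1 → FX j = cdfOf μX (γ j))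
    (hFY : ∀ j, 1 ≤ j → j ≤ J - 1 → FY j = cdfOf μY (γ j + Δ j))
    (m : ℕ) (hm1 : 1 ≤ m) (hm2 : m ≤ J - 2)
    (hSClo : ∀ j, 1 ≤ j → j ≤ m → FX j < FY j)
    (hSChi : ∀ j, m < j → j ≤ J - 1 → FY j < FX j)
    (τ₁ τ₂ : ℝ)
    (hτ₁ : τ₁ ∈ ⋃ j ∈ {j : ℕ | 1 ≤ j ∧ j ≤ m}, Set.Ioc (FX j) (FY j))
    (hτ₂ : τ₂ ∈ ⋃ j ∈ {j : ℕ | m < j ∧ j ≤ J - 1}, Set.Ioc (FY j) (FX j)) :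
    quantileE μX τ₂ - quantileE μX τ₁ < quantileE μY τ₂ - quantileE μY τ₁ := by
  simp only [Set.mem_iUnion, Set.mem_setOf_eq, Set.mem_Ioc, exists_prop] at hτ₁ hτ₂
  obtain ⟨j₁, ⟨hj₁1, hj₁m⟩, hτ₁l, hτ₁u⟩ := hτ₁
  obtain ⟨j₂, ⟨hj₂m, hj₂J⟩, hτ₂l, hτ₂u⟩ := hτ₂
  have hj₁J : j₁ ≤ J - 1 := le_trans (le_trans hj₁m hm2) (Nat.sub_le_sub_left (by norm_num) J)
  have hj₁₂ : j₁ < j₂ := lt_of_le_of_lt hj₁m hj₂m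
  have hγlt : γ j₁ < γ j₂ := hγ j₁ j₂ hj₁1 hj₁₂ hj₂J
  have hj₂1 : 1 ≤ j₂ := le_trans hm1 hj₂m.le
  have hΔ1 : Δ j₁ = Δγ := hΔ j₁ hj₁1 hj₁J
  have hΔ2 : Δ j₂ = Δγ := hΔ j₂ hj₂1 hj₂J
  -- rewrite the ordinal CDFs
  rw [hFX j₁ hj₁1 hj₁J] at hτ₁l
  rw [hFY j₁ hj₁1 hj₁J, hΔ1] at hτ₁u
  rw [hFY j₂ hj₂1 hj₂J, hΔ2] at hτ₂l
  rw [hFX j₂ hj₂1 hj₂J] at hτ₂u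
  -- FY monotone across the crossing:  τ₁ ≤ FY j₁ ≤ FY j₂ < FX j₂
  have hFYmono : cdfOf μY (γ j₁ + Δγ) ≤ cdfOf μY (γ j₂ + Δγ) :=
    cdfOf_mono μY (by linarith)
  have hcross : cdfOf μY (γ j₂ + Δγ) < cdfOf μX (γ j₂) := by
    have := hSChi j₂ hj₂m hj₂J
    rwa [hFY j₂ hj₂1 hj₂J, hΔ2, hFX j₂ hj₂1 hj₂J] at this
  -- quantile bounds
  have ha : quantileE μX τ₂ ≤ (γ j₂ : EReal) := quantileE_le μX hτ₂u
  have hb₁ : (γ j₁ : EReal) < quantileE μX τ₁ := lt_quantileE μX hτ₁l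
  have hc : ((γ j₂ + Δγ : ℝ) : EReal) < quantileE μY τ₂ := lt_quantileE μY hτ₂l
  have hd : quantileE μY τ₁ ≤ ((γ j₁ + Δγ : ℝ) : EReal) := quantileE_le μY hτ₁u
  -- LHS ≤ γ j₂ - γ j₁
  have hLHS : quantileE μX τ₂ - quantileE μX τ₁ ≤ ((γ j₂ - γ j₁ : ℝ) : EReal) := by
    have := EReal.sub_le_sub ha hb₁.le
    rwa [← EReal.coe_sub] at this
  -- RHS > γ j₂ - γ j₁
  have hRHS : ((γ j₂ - γ j₁ : ℝ) : EReal) < quantileE μY τ₂ - quantileE μY τ₁ := by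
    rcases eq_or_ne (quantileE μY τ₁) ⊥ with hbot | hbot
    · rw [hbot]
      have hctop : quantileE μY τ₂ ≠ ⊥ := ne_bot_of_gt hc
      have : quantileE μY τ₂ - ⊥ = ⊤ := by
        rw [show (quantileE μY τ₂ - ⊥) = quantileE μY τ₂ + -⊥ from rfl, EReal.neg_bot,
          EReal.add_top_of_ne_bot hctop]
      rw [this]
      exact EReal.coe_lt_top _
    · have h := EReal.sub_lt_sub_of_lt_of_le hc hd hbot (EReal.coe_ne_top _)
      rw [← EReal.coe_sub] at h
      have : ((γ j₂ + Δγ) - (γ j₁ + Δγ) : ℝ) = γ j₂ - γ j₁ := by ring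
      rwa [this] at h
  exact lt_of_le_of_lt hLHS hRHS
end

section
/- Under the estimation setting described in the context, let 1 − α̃/2 be the √(1−α)-quantile of the distribution of Φ(max_j |(D_X W)_j|) and let 1 − β̃/2 be the √(1−α)-quantile of the distribution of Φ(max_j |(D_Y M)_j|). For each j = 1,…,J−1 define ĈXL(j) = F̂_X(j) − z_{1−α̃/2} √(Σ̂_{X,jj}/n_X), ĈXU(j) = F̂_X(j) + z_{1−α̃/2} √(Σ̂_{X,jj}/n_X), ĈYL(j) = F̂_Y(j) − z_{1−β̃/2} √(Σ̂_{Y,jj}/n_Y), ĈYU(j) = F̂_Y(j) + z_{1−β̃/2} √(Σ̂_{Y,jj}/n_Y); let T̂_{Xj} = (ĈXU(j), ĈYL(j)] if ĈXU(j) < ĈYL(j) (else ∅) and T̂_{Yj} = (ĈYU(j), ĈXL(j)] if ĈYU(j) < ĈXL(j) (else ∅); and let T̂ = {(τ_1, τ_2) : τ_1 ∈ T̂_{Xj}, τ_2 ∈ T̂_{Yk} for some j < k}. Define T_{Xj} = (F_X(j), F_Y(j)] if F_X(j) < F_Y(j) (else ∅), T_{Yj} = (F_Y(j), F_X(j)]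 if F_Y(j) < F_X(j) (else ∅), and T = {(τ_1, τ_2) : τ_1 ∈ T_{Xj}, τ_2 ∈ T_{Yk} for some j < k}. Then liminf_{n_X, n_Y → ∞} P(T̂ ⊆ T) ≥ 1 − α. -/
open MeasureTheory Matrix Filter Set

/-- Convergence in distribution (weak convergence of laws), via bounded continuous
test functions. -/
def TendstoInDistribution {Ω E : Type*} [MeasurableSpace Ω] [MeasurableSpace E]
    [TopologicalSpace E]
    (P : MeasureTheory.Measure Ω) (Z : ℕ → Ω → E) (ν : MeasureTheory.Measure E) : Prop :=
  ∀ f : BoundedContinuousFunction E ℝ,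
    Filter.Tendsto (fun n => ∫ ω, f (Z n ω) ∂P) Filter.atTop (nhds (∫ x, f x ∂ν))

/-- `ν` is the centered multivariate normal distribution `N(0, S)` on `ι → ℝ`. -/
def IsCenteredGaussianVec {ι : Type*} [Fintype ι] (ν : MeasureTheory.Measure (ι → ℝ))
    (S : Matrix ι ι ℝ) : Prop :=
  ∀ a : ι → ℝ,
    ν.map (fun x => ∑ i, a i * x i) =
      ProbabilityTheory.gaussianReal 0 (Real.toNNReal (a ⬝ᵥ S.mulVec a))

/-- Standard normal CDF `Φ`. -/
noncomputable def stdNormalCDF (x : ℝ) : ℝ :=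
  ProbabilityTheory.cdf (ProbabilityTheory.gaussianReal 0 1) x

/-- `p`-quantile of a distribution `μ` on ℝ: `inf {x : μ((−∞,x]) ≥ p}`. -/
noncomputable def quantileOf (μ : MeasureTheory.Measure ℝ) (p : ℝ) : ℝ :=
  sInf {x : ℝ | p ≤ (μ (Set.Iic x)).toReal}

/-- Standard normal quantile `z_p = Φ⁻¹(p)`. -/
noncomputable def zq (p : ℝ) : ℝ := sInf {x : ℝ | p ≤ stdNormalCDF x}


section AuxStmt7

open ProbabilityTheory
open scoped NNReal ENNReal


lemma gauss_Ioc_pos {x y : ℝ} (hxy : x < y) : gaussianReal 0 1 (Ioc x y) ≠ 0 := by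
  rw [gaussianReal_of_var_ne_zero 0 one_ne_zero,
    Ne, withDensity_apply_eq_zero (measurable_gaussianPDF 0 1)]
  have h1 : {x : ℝ | gaussianPDF 0 1 x ≠ 0} = univ := by
    ext t; simp [(gaussianPDF_pos 0 one_ne_zero t).ne']
  rw [h1, Set.univ_inter]
  simp only [Real.volume_Ioc]
  simp [ENNReal.ofReal_eq_zero, not_le, sub_pos, hxy]

lemma gauss_singleton (c : ℝ) : gaussianReal 0 1 {c} = 0 :=
  gaussianReal_absolutelyContinuous 0 one_ne_zero Real.volume_singleton

lemma stdNormalCDF_eq (x : ℝ) : stdNormalCDF x = ((gaussianReal 0 1) (Iic x)).toReal := by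
  rw [stdNormalCDF, cdf_eq_real, measureReal_def]

lemma stdNormalCDF_mono : Monotone stdNormalCDF := fun _ _ h => ProbabilityTheory.monotone_cdf _ h

lemma stdNormalCDF_strictMono : StrictMono stdNormalCDF := by
  intro x y hxy
  rw [stdNormalCDF_eq, stdNormalCDF_eq]
  have hu : gaussianReal 0 1 (Iic y) = gaussianReal 0 1 (Iic x) + gaussianReal 0 1 (Ioc x y) := by
    rw [← measure_union (Set.Iic_disjoint_Ioc le_rfl) measurableSet_Ioc,
      Set.Iic_union_Ioc_eq_Iic hxy.le]
  refine (ENNReal.toReal_lt_toReal (measure_ne_top _ _) (measure_ne_top _ _)).2 ?_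
  rw [hu]
  exact ENNReal.lt_add_right (measure_ne_top _ _) (gauss_Ioc_pos hxy)

lemma stdNormalCDF_lt_one (x : ℝ) : stdNormalCDF x < 1 :=
  lt_of_lt_of_le (stdNormalCDF_strictMono (lt_add_one x)) (cdf_le_one _ _)

lemma stdNormalCDF_pos (x : ℝ) : 0 < stdNormalCDF x :=
  lt_of_le_of_lt (cdf_nonneg _ _) (stdNormalCDF_strictMono (sub_one_lt x))

lemma stdNormalCDF_zero : stdNormalCDF 0 = 1 / 2 := by
  have hmap := gaussianReal_map_const_mul (μ := (0 : ℝ)) (v := (1 : ℝ≥0)) (-1 : ℝ)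
  norm_num at hmap
  have h2 : gaussianReal 0 1 (Ici 0) = gaussianReal 0 1 (Iic 0) := by
    conv_rhs => rw [← hmap]
    rw [Measure.map_apply measurable_neg measurableSet_Iic]
    congr 1
    ext t
    simp only [Set.mem_Ici, Set.mem_preimage, Set.mem_Iic, neg_nonpos]
  have h3 : gaussianReal 0 1 (Iic 0) + gaussianReal 0 1 (Ici 0)
      = gaussianReal 0 1 (Iic 0 ∪ Ici 0) + gaussianReal 0 1 (Iic 0 ∩ Ici 0) :=
    (measure_union_add_inter (Iic 0) measurableSet_Ici).symm
  rw [Set.Iic_union_Ici, Set.Iic_inter_Ici, Set.Icc_self, gauss_singleton, add_zero,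
    measure_univ, h2] at h3
  have h4 := congrArg ENNReal.toReal h3
  rw [ENNReal.toReal_add (measure_ne_top _ _) (measure_ne_top _ _), ENNReal.toReal_one] at h4
  rw [stdNormalCDF_eq]
  linarith

lemma iInter_Iic_eq (z : ℝ) : (⋂ n : ℕ, Iic (z + 1 / (n + 1))) = Iic z := by
  ext t
  simp only [Set.mem_iInter, Set.mem_Iic]
  constructor
  · intro h
    by_contra hzt
    push_neg at hzt
    obtain ⟨n, hn⟩ := exists_nat_one_div_lt (sub_pos.2 hzt)
    have := h n
    push_cast at hn ⊢
    linarith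
  · intro h n
    have : (0 : ℝ) < 1 / (n + 1) := by positivity
    linarith

lemma iUnion_Iic_eq (z : ℝ) : (⋃ n : ℕ, Iic (z - 1 / (n + 1))) = Iio z := by
  ext t
  simp only [Set.mem_iUnion, Set.mem_Iic, Set.mem_Iio]
  constructor
  · rintro ⟨n, hn⟩
    have : (0 : ℝ) < 1 / (n + 1) := by positivity
    linarith
  · intro h
    obtain ⟨n, hn⟩ := exists_nat_one_div_lt (sub_pos.2 h)
    exact ⟨n, by push_cast at hn ⊢; linarith⟩

lemma quantile_mem {μ : Measure ℝ} [IsProbabilityMeasure μ] {p : ℝ}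
    (hne : {x : ℝ | p ≤ (μ (Iic x)).toReal}.Nonempty)
    (hbdd : BddBelow {x : ℝ | p ≤ (μ (Iic x)).toReal}) :
    p ≤ (μ (Iic (sInf {x : ℝ | p ≤ (μ (Iic x)).toReal}))).toReal := by
  set A := {x : ℝ | p ≤ (μ (Iic x)).toReal} with hA
  set z := sInf A with hz
  have hanti : Antitone (fun n : ℕ => Iic (z + 1 / (n + 1))) := by
    intro n m hnm
    apply Iic_subset_Iic.2
    have : (1 : ℝ) / (m + 1) ≤ 1 / (n + 1) := by
      apply one_div_le_one_div_of_le (by positivity)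
      exact_mod_cast Nat.succ_le_succ hnm
    linarith
  have ht := tendsto_measure_iInter_atTop
    (μ := μ) (fun n => measurableSet_Iic.nullMeasurableSet) hanti ⟨0, measure_ne_top _ _⟩
  rw [iInter_Iic_eq] at ht
  have hlb : ∀ n : ℕ, ENNReal.ofReal p ≤ μ (Iic (z + 1 / (n + 1))) := by
    intro n
    have hlt : sInf A < z + 1 / (n + 1) := by
      rw [← hz]; have : (0:ℝ) < 1 / (n+1) := by positivity
      linarith
    obtain ⟨a, haA, halt⟩ := (csInf_lt_iff hbdd hne).1 hlt
    calc ENNReal.ofReal p ≤ μ (Iic a) :=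
          (ENNReal.ofReal_le_iff_le_toReal (measure_ne_top _ _)).2 haA
      _ ≤ μ (Iic (z + 1 / (n + 1))) := measure_mono (Iic_subset_Iic.2 halt.le)
  have := ge_of_tendsto' ht hlb
  exact (ENNReal.ofReal_le_iff_le_toReal (measure_ne_top _ _)).1 this

lemma cdf_left_le {μ : Measure ℝ} [IsProbabilityMeasure μ] {z q : ℝ} (hq0 : 0 ≤ q)
    (hatom : μ {z} = 0) (h : ∀ x < z, (μ (Iic x)).toReal ≤ q) : (μ (Iic z)).toReal ≤ q := by
  have hmono : Monotone (fun n : ℕ => Iic (z - 1 / (n + 1))) := by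
    intro n m hnm
    apply Iic_subset_Iic.2
    have : (1 : ℝ) / (m + 1) ≤ 1 / (n + 1) := by
      apply one_div_le_one_div_of_le (by positivity)
      exact_mod_cast Nat.succ_le_succ hnm
    linarith
  have ht := tendsto_measure_iUnion_atTop (μ := μ) hmono
  rw [iUnion_Iic_eq] at ht
  have hub : ∀ n : ℕ, μ (Iic (z - 1 / (n + 1))) ≤ ENNReal.ofReal q := by
    intro n
    have hpos : (0:ℝ) < 1 / (n + 1) := by positivity
    have h1 := h (z - 1 / (n + 1)) (by linarith)
    exact (ENNReal.le_ofReal_iff_toReal_le (measure_ne_top _ _) hq0).2 h1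
  have h1 : μ (Iio z) ≤ ENNReal.ofReal q := le_of_tendsto' ht hub
  have h2 : μ (Iic z) ≤ μ (Iio z) + μ {z} := by
    refine le_trans (measure_mono ?_) (measure_union_le _ _)
    intro t ht
    rcases lt_or_eq_of_le (show t ≤ z from ht) with h' | h'
    · exact Or.inl h'
    · exact Or.inr h'
  rw [hatom, add_zero] at h2
  exact ENNReal.toReal_le_of_le_ofReal hq0 (h2.trans h1)

lemma zq_cdf {q : ℝ} (hq : q ∈ Set.Ioo (0:ℝ) 1) : stdNormalCDF (zq q) = q := by
  set A := {x : ℝ | q ≤ stdNormalCDF x} with hA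
  have hAeq : A = {x : ℝ | q ≤ ((gaussianReal 0 1) (Iic x)).toReal} := by
    ext x; simp [hA, stdNormalCDF_eq]
  have hne : A.Nonempty := by
    have h := (tendsto_cdf_atTop (μ := gaussianReal 0 1)).eventually (eventually_ge_nhds hq.2)
    obtain ⟨x, hx⟩ := h.exists
    exact ⟨x, hx⟩
  have hbdd : BddBelow A := by
    have h := (tendsto_cdf_atBot (μ := gaussianReal 0 1)).eventually (eventually_lt_nhds hq.1)
    obtain ⟨x1, hx1⟩ := eventually_atBot.1 h
    refine ⟨x1, fun a ha => ?_⟩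
    by_contra hcon
    push_neg at hcon
    exact absurd ha (not_le.2 (hx1 a hcon.le))
  have hupper : q ≤ stdNormalCDF (zq q) := by
    rw [stdNormalCDF_eq]
    have := quantile_mem (μ := gaussianReal 0 1) (p := q)
      (by rw [← hAeq]; exact hne) (by rw [← hAeq]; exact hbdd)
    rwa [show {x : ℝ | q ≤ ((gaussianReal 0 1) (Iic x)).toReal} = A from hAeq.symm] at this
  have hlower : stdNormalCDF (zq q) ≤ q := by
    rw [stdNormalCDF_eq]
    refine cdf_left_le hq.1.le (gauss_singleton _) (fun x hx => ?_)
    rw [← stdNormalCDF_eq]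
    by_contra hcon
    push_neg at hcon
    exact absurd (csInf_le hbdd (le_of_lt hcon : q ≤ stdNormalCDF x)) (not_le.2 hx)
  linarith

lemma zq_le_iff {q : ℝ} (hq : q ∈ Set.Ioo (0:ℝ) 1) (t : ℝ) :
    stdNormalCDF t ≤ q ↔ t ≤ zq q := by
  have hc := zq_cdf hq
  constructor
  · intro h
    exact stdNormalCDF_strictMono.le_iff_le.1 (h.trans hc.ge)
  · intro h
    exact (stdNormalCDF_mono h).trans hc.le

lemma zq_pos {q : ℝ} (hq : q ∈ Set.Ioo (0:ℝ) 1) (hq2 : 1 / 2 < q) : 0 < zq q := by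
  have h := zq_cdf hq
  have : stdNormalCDF 0 < stdNormalCDF (zq q) := by rw [stdNormalCDF_zero, h]; exact hq2
  exact stdNormalCDF_strictMono.lt_iff_lt.1 this

lemma coord_map {ι : Type*} [Fintype ι] [DecidableEq ι] {ν : Measure (ι → ℝ)}
    {S : Matrix ι ι ℝ} (hν : IsCenteredGaussianVec ν S) (j : ι) :
    ν.map (fun w => w j) = gaussianReal 0 (Real.toNNReal (S j j)) := by
  have h := hν ((Pi.single j 1 : ι → ℝ))
  have hf : (fun x : ι → ℝ => ∑ i, (Pi.single j 1 : ι → ℝ) i * x i) = fun x => x j := by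
    funext x
    simp [Pi.single_apply, ite_mul]
  have hv : (Pi.single j 1 : ι → ℝ) ⬝ᵥ S.mulVec ((Pi.single j 1 : ι → ℝ)) = S j j := by
    simp [dotProduct, Matrix.mulVec, Pi.single_apply, ite_mul, mul_ite]
  rw [hf, hv] at h
  exact h

lemma coord_atom {ι : Type*} [Fintype ι] [DecidableEq ι] {ν : Measure (ι → ℝ)}
    {S : Matrix ι ι ℝ} (hν : IsCenteredGaussianVec ν S) {j : ι} (hjj : 0 < S j j) (c : ℝ) :
    ν {w : ι → ℝ | w j = c} = 0 := by
  have h1 : {w : ι → ℝ | w j = c} = (fun w : ι → ℝ => w j) ⁻¹' {c} := rfl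
  rw [h1, ← Measure.map_apply (measurable_pi_apply j) (measurableSet_singleton c),
    coord_map hν j]
  exact gaussianReal_absolutelyContinuous _ (Real.toNNReal_pos.2 hjj).ne' Real.volume_singleton

set_option maxHeartbeats 2000000 in
lemma onesample {Ω : Type*} [MeasurableSpace Ω] (P : Measure Ω) [IsProbabilityMeasure P]
    {d : ℕ} (hd : 0 < d) (F : Fin d → ℝ) (Fhat : ℕ → Ω → Fin d → ℝ)
    (hFmeas : ∀ n, Measurable (Fhat n))
    (S : Matrix (Fin d) (Fin d) ℝ) (hdiag : ∀ j, 0 < S j j)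
    (ν : Measure (Fin d → ℝ)) [IsProbabilityMeasure ν]
    (hν : IsCenteredGaussianVec ν S)
    (hconv : TendstoInDistribution P (fun n ω j => Real.sqrt n * (Fhat n ω j - F j)) ν)
    (Shat : ℕ → Ω → Matrix (Fin d) (Fin d) ℝ)
    (hShat : ∀ j k : Fin d, ∀ ε > (0:ℝ),
      Tendsto (fun n => P {ω | ε ≤ |Shat n ω j k - S j k|}) atTop (nhds 0))
    {s : ℝ} (hs : s ∈ Set.Ioo (0:ℝ) 1)
    {q : ℝ}
    (hq : q = quantileOf (ν.map (fun w => stdNormalCDF (⨆ j, |w j / Real.sqrt (S j j)|))) s)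
    {r : ℝ} (hr : r < s) :
    ∀ᶠ n in atTop,
      r ≤ (P {ω | ∀ j, |Fhat n ω j - F j| ≤ zq q * Real.sqrt (Shat n ω j j / n)}).toReal := by
  haveI hnem : Nonempty (Fin d) := Fin.pos_iff_nonempty.1 hd
  rcases le_or_gt r 0 with hr0 | hr0
  · exact Eventually.of_forall fun n => hr0.trans ENNReal.toReal_nonneg
  set σ : Fin d → ℝ := fun j => Real.sqrt (S j j) with hσdef
  have hσ : ∀ j, 0 < σ j := fun j => Real.sqrt_pos.2 (hdiag j)
  set g : (Fin d → ℝ) → ℝ := fun w => ⨆ j, |w j / σ j| with hgdef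
  have hgc : Continuous g := by
    have hrepr : g = fun w => Finset.univ.sup' Finset.univ_nonempty
        (fun j : Fin d => |w j / σ j|) :=
      funext fun w => (Finset.sup'_univ_eq_ciSup _).symm
    rw [hrepr]
    exact Continuous.finset_sup'_apply (f := fun (j : Fin d) (w : Fin d → ℝ) => |w j / σ j|)
      Finset.univ_nonempty (fun j _ => ((continuous_apply j).div_const _).abs)
  have hbddrange : ∀ w : Fin d → ℝ, BddAbove (Set.range fun j => |w j / σ j|) :=
    fun w => (Set.finite_range _).bddAbove
  have hg_le : ∀ (w : Fin d → ℝ) (j), |w j / σ j| ≤ g w := fun w j => le_ciSup (hbddrange w) j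
  have hgmeas : Measurable g := hgc.measurable
  have hΦmeas : Measurable stdNormalCDF := stdNormalCDF_mono.measurable
  set μΦ := ν.map (fun w => stdNormalCDF (g w)) with hμΦdef
  haveI : IsProbabilityMeasure μΦ :=
    Measure.isProbabilityMeasure_map (hΦmeas.comp hgmeas).aemeasurable
  have hμΦ_apply : ∀ x, μΦ (Iic x) = ν {w | stdNormalCDF (g w) ≤ x} := fun x =>
    Measure.map_apply (hΦmeas.comp hgmeas) measurableSet_Iic
  set A := {x : ℝ | s ≤ (μΦ (Iic x)).toReal} with hAdef
  have hqA : q = sInf A := hq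
  -- nonemptyness of A
  have hUmono : Monotone (fun N : ℕ => {w : Fin d → ℝ | g w ≤ (N:ℝ)}) := by
    intro a b hab w hw
    simp only [Set.mem_setOf_eq] at *
    exact le_trans hw (by exact_mod_cast hab)
  have hU := tendsto_measure_iUnion_atTop (μ := ν) hUmono
  have hUuniv : (⋃ N : ℕ, {w : Fin d → ℝ | g w ≤ (N:ℝ)}) = univ := by
    ext w
    simp only [Set.mem_iUnion, Set.mem_setOf_eq, Set.mem_univ, iff_true]
    exact exists_nat_ge (g w)
  rw [hUuniv, measure_univ] at hU
  have hUev : ∀ᶠ N : ℕ in atTop, ENNReal.ofReal s < ν {w : Fin d → ℝ | g w ≤ (N:ℝ)} :=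
    hU.eventually (lt_mem_nhds (ENNReal.ofReal_lt_one.2 hs.2))
  obtain ⟨N, hN⟩ := hUev.exists
  have hΦN_mem : stdNormalCDF N ∈ A := by
    have hsub : {w : Fin d → ℝ | g w ≤ (N:ℝ)} ⊆ {w | stdNormalCDF (g w) ≤ stdNormalCDF N} :=
      fun w hw => stdNormalCDF_mono hw
    have : ENNReal.ofReal s ≤ μΦ (Iic (stdNormalCDF N)) := by
      rw [hμΦ_apply]
      exact le_trans hN.le (measure_mono hsub)
    exact (ENNReal.ofReal_le_iff_le_toReal (measure_ne_top _ _)).1 this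
  -- measure zero below 1/2
  have hhalf : ∀ x ≤ (1:ℝ)/2, μΦ (Iic x) = 0 := by
    intro x hx
    rw [hμΦ_apply]
    set j0 : Fin d := Classical.arbitrary _
    have hsub : {w : Fin d → ℝ | stdNormalCDF (g w) ≤ x} ⊆ {w : Fin d → ℝ | w j0 = 0} := by
      intro w hw
      have h1 : stdNormalCDF (g w) ≤ stdNormalCDF 0 := by
        rw [stdNormalCDF_zero]; exact le_trans hw hx
      have h2 : g w ≤ 0 := stdNormalCDF_strictMono.le_iff_le.1 h1
      have h3 : |w j0 / σ j0| ≤ 0 := le_trans (hg_le w j0) h2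
      have h4 : w j0 / σ j0 = 0 := abs_nonpos_iff.1 h3
      have := (hσ j0).ne'
      field_simp at h4
      exact h4.trans (mul_zero _)
    exact measure_mono_null hsub (coord_atom hν (hdiag j0) 0)
  have hbddA : BddBelow A := by
    refine ⟨1/2, fun a ha => ?_⟩
    by_contra hcon
    push_neg at hcon
    rw [hAdef, Set.mem_setOf_eq, hhalf a hcon.le] at ha
    simp only [ENNReal.toReal_zero] at ha
    linarith [hs.1]
  have hAne : A.Nonempty := ⟨stdNormalCDF N, hΦN_mem⟩
  have hKq : s ≤ (μΦ (Iic q)).toReal := by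
    rw [hqA]; exact quantile_mem hAne hbddA
  have hq_half : 1/2 < q := by
    by_contra hcon
    push_neg at hcon
    rw [hhalf q hcon] at hKq
    simp only [ENNReal.toReal_zero] at hKq
    linarith [hs.1]
  have hq_lt1 : q < 1 := lt_of_le_of_lt (hqA ▸ csInf_le hbddA hΦN_mem) (stdNormalCDF_lt_one N)
  have hqIoo : q ∈ Set.Ioo (0:ℝ) 1 := ⟨by linarith, hq_lt1⟩
  set z := zq q with hzdef
  have hz_pos : 0 < z := zq_pos hqIoo hq_half
  have hset : {w : Fin d → ℝ | stdNormalCDF (g w) ≤ q} = {w | g w ≤ z} := by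
    ext w; exact zq_le_iff hqIoo (g w)
  have hKz : ENNReal.ofReal s ≤ ν {w | g w ≤ z} := by
    rw [← hset]
    have := (ENNReal.ofReal_le_iff_le_toReal (measure_ne_top μΦ _)).2 hKq
    rwa [hμΦ_apply] at this
  -- no atom at z
  have hatomg : ν {w : Fin d → ℝ | g w = z} = 0 := by
    refine measure_mono_null (t := ⋃ j, ({w : Fin d → ℝ | w j = z * σ j}
      ∪ {w : Fin d → ℝ | w j = -(z * σ j)})) ?_ ?_
    · intro w hw
      obtain ⟨j, hj⟩ := exists_eq_ciSup_of_finite (f := fun j => |w j / σ j|)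
      have hj' : |w j / σ j| = z := by rw [hj]; exact hw
      have hj2 : |w j| = z * σ j := by
        rw [abs_div, abs_of_pos (hσ j), div_eq_iff (hσ j).ne'] at hj'
        linarith [hj']
      rcases (abs_eq (by positivity : (0:ℝ) ≤ z * σ j)).1 hj2 with h' | h'
      · exact Set.mem_iUnion.2 ⟨j, Or.inl h'⟩
      · exact Set.mem_iUnion.2 ⟨j, Or.inr h'⟩
    · exact measure_iUnion_null fun j =>
        measure_union_null (coord_atom hν (hdiag j) _) (coord_atom hν (hdiag j) _)
  have hKzlt : ENNReal.ofReal s ≤ ν {w : Fin d → ℝ | g w < z} := by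
    have hsplit : ν {w : Fin d → ℝ | g w ≤ z}
        ≤ ν {w : Fin d → ℝ | g w < z} + ν {w : Fin d → ℝ | g w = z} := by
      refine le_trans (measure_mono ?_) (measure_union_le _ _)
      intro w hw
      rcases lt_or_eq_of_le (show g w ≤ z from hw) with h' | h'
      · exact Or.inl h'
      · exact Or.inr h'
    rw [hatomg, add_zero] at hsplit
    exact hKz.trans hsplit
  -- pick r' and c
  set r' := (r + s) / 2 with hr'def
  have hr'1 : r < r' := by rw [hr'def]; linarith
  have hr'2 : r' < s := by rw [hr'def]; linarith
  -- approximation from below of {g < z}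
  have hCmono : Monotone (fun m : ℕ => {w : Fin d → ℝ | g w < z - 1/(m+1)}) := by
    intro a b hab w hw
    simp only [Set.mem_setOf_eq] at *
    have h1 : (1:ℝ)/((b:ℝ)+1) ≤ 1/((a:ℝ)+1) := by
      apply one_div_le_one_div_of_le (by positivity)
      exact_mod_cast Nat.succ_le_succ hab
    exact lt_of_lt_of_le hw (by linarith)
  have hC := tendsto_measure_iUnion_atTop (μ := ν) hCmono
  have hCun : (⋃ m : ℕ, {w : Fin d → ℝ | g w < z - 1/(m+1)}) = {w : Fin d → ℝ | g w < z} := by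
    ext w
    simp only [Set.mem_iUnion, Set.mem_setOf_eq]
    constructor
    · rintro ⟨m, hm⟩
      have : (0:ℝ) < 1/(m+1) := by positivity
      linarith
    · intro hw
      obtain ⟨m, hm⟩ := exists_nat_one_div_lt (sub_pos.2 hw)
      exact ⟨m, by push_cast at hm ⊢; linarith⟩
  rw [hCun] at hC
  have hr's : ENNReal.ofReal r' < ν {w : Fin d → ℝ | g w < z} :=
    lt_of_lt_of_le ((ENNReal.ofReal_lt_ofReal_iff hs.1).2 hr'2) hKzlt
  obtain ⟨m, hm⟩ := (hC.eventually (lt_mem_nhds hr's)).exists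
  set c := z - 1/((m:ℝ)+1) with hcdef
  have hc_lt : c < z := by
    rw [hcdef]
    have : (0:ℝ) < 1/((m:ℝ)+1) := by positivity
    linarith
  have hνc : ENNReal.ofReal r' < ν {w : Fin d → ℝ | g w < c} := hm
  -- choose δ
  set t := max (c / z) 0 with htdef
  have ht0 : 0 ≤ t := le_max_right _ _
  have ht1 : t < 1 := by
    apply max_lt _ one_pos
    rw [div_lt_one hz_pos]
    exact hc_lt
  have ht2 : t^2 < 1 := by nlinarith
  set δ0 := Finset.univ.inf' Finset.univ_nonempty (fun j : Fin d => S j j) with hδ0def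
  have hδ0pos : 0 < δ0 := by
    rw [hδ0def, Finset.lt_inf'_iff]
    exact fun j _ => hdiag j
  have hδ0le : ∀ j, δ0 ≤ S j j := fun j => Finset.inf'_le _ (Finset.mem_univ j)
  set δ := δ0 * (1 - t^2) / 2 with hδdef
  have hδpos : 0 < δ := by rw [hδdef]; nlinarith
  have hδle : ∀ j, t^2 * S j j ≤ S j j - δ := by
    intro j
    have h1 := hδ0le j
    have h2 := hdiag j
    rw [hδdef]
    nlinarith
  have hδlt : ∀ j, δ < S j j := by
    intro j
    have h1 := hδ0le j
    rw [hδdef]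
    nlinarith
  have hkey : ∀ j, c * σ j ≤ z * Real.sqrt (S j j - δ) := by
    intro j
    have h1 : Real.sqrt (t^2 * S j j) ≤ Real.sqrt (S j j - δ) := Real.sqrt_le_sqrt (hδle j)
    have h2 : Real.sqrt (t^2 * S j j) = t * σ j := by
      rw [hσdef, Real.sqrt_mul (sq_nonneg t), Real.sqrt_sq ht0]
    have hczt : c ≤ z * t := by
      rcases le_or_gt c 0 with hc0 | hc0
      · exact le_trans hc0 (by positivity)
      · have : c / z ≤ t := le_max_left _ _
        calc c = z * (c / z) := by field_simp
          _ ≤ z * t := mul_le_mul_of_nonneg_left this hz_pos.le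
    calc c * σ j ≤ (z * t) * σ j := mul_le_mul_of_nonneg_right hczt (hσ j).le
      _ = z * (t * σ j) := by ring
      _ ≤ z * Real.sqrt (S j j - δ) := by
          rw [← h2]; exact mul_le_mul_of_nonneg_left h1 hz_pos.le
  -- weak convergence
  set Z : ℕ → Ω → Fin d → ℝ := fun n ω j => Real.sqrt n * (Fhat n ω j - F j) with hZdef
  have hZmeas : ∀ n, Measurable (Z n) := by
    intro n
    rw [hZdef]
    apply measurable_pi_iff.2
    intro j
    exact (((measurable_pi_apply j).comp (hFmeas n)).sub measurable_const).const_mul _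
  set μs : ℕ → Measure (Fin d → ℝ) := fun n => P.map (Z n) with hμsdef
  haveI : ∀ n, IsProbabilityMeasure (μs n) := fun n =>
    Measure.isProbabilityMeasure_map (hZmeas n).aemeasurable
  set νP : ProbabilityMeasure (Fin d → ℝ) := ⟨ν, inferInstance⟩ with hνPdef
  set μsP : ℕ → ProbabilityMeasure (Fin d → ℝ) := fun n => ⟨μs n, inferInstance⟩ with hμsPdef
  have htend : Tendsto μsP atTop (nhds νP) := by
    rw [ProbabilityMeasure.tendsto_iff_forall_integral_tendsto]
    intro f
    have h := hconv f
    exact Tendsto.congr (fun n =>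
      (integral_map (hZmeas n).aemeasurable
        f.continuous.measurable.aestronglyMeasurable).symm) h
  have hopen : IsOpen {w : Fin d → ℝ | g w < c} := isOpen_lt hgc continuous_const
  have hliminf := ProbabilityMeasure.le_liminf_measure_open_of_tendsto htend hopen
  have hev1 : ∀ᶠ n in atTop, ENNReal.ofReal r' < μs n {w : Fin d → ℝ | g w < c} := by
    exact eventually_lt_of_lt_liminf (lt_of_lt_of_le hνc hliminf) (by isBoundedDefault)
  -- bad set
  set Bc : ℕ → Set Ω := fun n => {ω | ∃ j, δ ≤ |Shat n ω j j - S j j|} with hBcdef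
  have hBc : Tendsto (fun n => P (Bc n)) atTop (nhds 0) := by
    have hle : ∀ n, P (Bc n) ≤ ∑ j : Fin d, P {ω | δ ≤ |Shat n ω j j - S j j|} := by
      intro n
      have : Bc n ⊆ ⋃ j, {ω | δ ≤ |Shat n ω j j - S j j|} := by
        rintro ω ⟨j, hj⟩
        exact Set.mem_iUnion.2 ⟨j, hj⟩
      refine le_trans (measure_mono this) ?_
      exact measure_iUnion_fintype_le _ _
    have hsum : Tendsto (fun n => ∑ j : Fin d, P {ω | δ ≤ |Shat n ω j j - S j j|})
        atTop (nhds 0) := by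
      have := tendsto_finset_sum (Finset.univ : Finset (Fin d))
        (fun j _ => hShat j j δ hδpos)
      simpa using this
    exact tendsto_of_tendsto_of_tendsto_of_le_of_le tendsto_const_nhds hsum
      (fun n => zero_le) hle
  have hr'r : (0:ℝ) < r' - r := by linarith
  have hev2 : ∀ᶠ n in atTop, P (Bc n) < ENNReal.ofReal (r' - r) :=
    hBc.eventually (gt_mem_nhds (ENNReal.ofReal_pos.2 hr'r))
  filter_upwards [hev1, hev2, eventually_ge_atTop 1] with n h1 h2 hn1
  set An := {ω | ∀ j, |Fhat n ω j - F j| ≤ zq q * Real.sqrt (Shat n ω j j / n)} with hAndef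
  have hsub : (Z n ⁻¹' {w : Fin d → ℝ | g w < c}) ∩ (Bc n)ᶜ ⊆ An := by
    rintro ω ⟨hωg, hωB⟩
    intro j
    have hωB' : ∀ j, |Shat n ω j j - S j j| < δ := by
      intro j
      by_contra hcon
      push_neg at hcon
      exact hωB ⟨j, hcon⟩
    have hj1 : |Z n ω j / σ j| ≤ g (Z n ω) := hg_le _ j
    have hj2 : |Z n ω j| < c * σ j := by
      rw [abs_div, abs_of_pos (hσ j)] at hj1
      exact (div_lt_iff₀ (hσ j)).1 (lt_of_le_of_lt hj1 hωg)
    have hS1 : S j j - δ ≤ Shat n ω j j := by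
      have := abs_lt.1 (hωB' j)
      linarith [this.1]
    have hS0 : 0 ≤ Shat n ω j j := le_trans (by linarith [hδlt j]) hS1
    have hj3 : |Z n ω j| ≤ z * Real.sqrt (Shat n ω j j) := by
      calc |Z n ω j| ≤ c * σ j := hj2.le
        _ ≤ z * Real.sqrt (S j j - δ) := hkey j
        _ ≤ z * Real.sqrt (Shat n ω j j) :=
            mul_le_mul_of_nonneg_left (Real.sqrt_le_sqrt hS1) hz_pos.le
    have hnpos : (0:ℝ) < Real.sqrt n := Real.sqrt_pos.2 (by exact_mod_cast hn1)
    have hZj : |Z n ω j| = Real.sqrt n * |Fhat n ω j - F j| := by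
      rw [hZdef]
      simp only
      rw [abs_mul, abs_of_nonneg (Real.sqrt_nonneg _)]
    rw [hZj] at hj3
    rw [hAndef, Set.mem_setOf_eq] at *
    have hsqrtdiv : Real.sqrt (Shat n ω j j / n) = Real.sqrt (Shat n ω j j) / Real.sqrt n :=
      Real.sqrt_div hS0 _
    rw [← hzdef, hsqrtdiv, ← mul_div_assoc, le_div_iff₀ hnpos]
    calc |Fhat n ω j - F j| * Real.sqrt n = Real.sqrt n * |Fhat n ω j - F j| := by ring
      _ ≤ z * Real.sqrt (Shat n ω j j) := hj3
  have hmain : ENNReal.ofReal r ≤ P An := by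
    have h3 : μs n {w : Fin d → ℝ | g w < c} = P (Z n ⁻¹' {w : Fin d → ℝ | g w < c}) :=
      Measure.map_apply (hZmeas n) hopen.measurableSet
    have h4 : P (Z n ⁻¹' {w : Fin d → ℝ | g w < c})
        ≤ P ((Z n ⁻¹' {w : Fin d → ℝ | g w < c}) ∩ (Bc n)ᶜ) + P (Bc n) := by
      refine le_trans (measure_le_inter_add_diff P _ ((Bc n)ᶜ)) ?_
      gcongr
      intro ω hω
      simpa using hω.2
    have h6 : ENNReal.ofReal r' ≤ P An + ENNReal.ofReal (r' - r) := by
      refine le_trans h1.le ?_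
      rw [h3]
      exact h4.trans (add_le_add (measure_mono hsub) h2.le)
    have h7 : ENNReal.ofReal r = ENNReal.ofReal r' - ENNReal.ofReal (r' - r) := by
      rw [← ENNReal.ofReal_sub _ (by linarith : (0:ℝ) ≤ r' - r)]
      ring_nf
    rw [h7]
    exact tsub_le_iff_right.2 h6
  exact (ENNReal.ofReal_le_iff_le_toReal (measure_ne_top _ _)).1 hmain

end AuxStmt7

set_option maxHeartbeats 2000000 in
/-- Theorem 5 of the paper: asymptotic validity of the all-categories
within-group inner confidence set
`T̂ = {(τ₁, τ₂) : τ₁ ∈ T̂_{Xj}, τ₂ ∈ T̂_{Yk} for some j < k}` for the true set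
`T = {(τ₁, τ₂) : τ₁ ∈ T_{Xj}, τ₂ ∈ T_{Yk} for some j < k}`, using two-sided joint
confidence limits.  `Set.Ioc c d` is empty when `c ≥ d`, matching the "otherwise ∅"
clauses; the `X` and `Y` samples are independent, modeled by the product probability
space `(ΩX × ΩY, PX ⊗ PY)`. -/
theorem stmt7
    {ΩX ΩY : Type*} [MeasurableSpace ΩX] [MeasurableSpace ΩY]
    (PX : MeasureTheory.Measure ΩX) (PY : MeasureTheory.Measure ΩY)
    [IsProbabilityMeasure PX] [IsProbabilityMeasure PY]
    (J : ℕ) (hJ : 2 ≤ J)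
    (α : ℝ) (hα : α ∈ Set.Ioo (0 : ℝ) 1)
    (FX FY : Fin (J - 1) → ℝ)
    (hFX01 : ∀ j, FX j ∈ Set.Icc (0 : ℝ) 1) (hFY01 : ∀ j, FY j ∈ Set.Icc (0 : ℝ) 1)
    (FXhat : ℕ → ΩX → Fin (J - 1) → ℝ) (FYhat : ℕ → ΩY → Fin (J - 1) → ℝ)
    (hFXhatMeas : ∀ n, Measurable (FXhat n)) (hFYhatMeas : ∀ n, Measurable (FYhat n))
    (SX SY : Matrix (Fin (J - 1)) (Fin (J - 1)) ℝ)
    (hSX : SX.PosSemidef) (hSY : SY.PosSemidef)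
    (hSXdiag : ∀ j, 0 < SX j j) (hSYdiag : ∀ j, 0 < SY j j)
    (νX νY : MeasureTheory.Measure (Fin (J - 1) → ℝ))
    [IsProbabilityMeasure νX] [IsProbabilityMeasure νY]
    (hνX : IsCenteredGaussianVec νX SX) (hνY : IsCenteredGaussianVec νY SY)
    (hXconv : TendstoInDistribution PX
      (fun n ωx j => Real.sqrt n * (FXhat n ωx j - FX j)) νX)
    (hYconv : TendstoInDistribution PY
      (fun n ωy j => Real.sqrt n * (FYhat n ωy j - FY j)) νY)
    (SXhat : ℕ → ΩX → Matrix (Fin (J - 1)) (Fin (J - 1)) ℝ)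
    (SYhat : ℕ → ΩY → Matrix (Fin (J - 1)) (Fin (J - 1)) ℝ)
    (hSXhatMeas : ∀ n j k, Measurable fun ωx => SXhat n ωx j k)
    (hSYhatMeas : ∀ n j k, Measurable fun ωy => SYhat n ωy j k)
    (hSXhat : ∀ j k : Fin (J - 1), ∀ ε > (0 : ℝ),
      Filter.Tendsto (fun n => PX {ωx | ε ≤ |SXhat n ωx j k - SX j k|})
        Filter.atTop (nhds 0))
    (hSYhat : ∀ j k : Fin (J - 1), ∀ ε > (0 : ℝ),
      Filter.Tendsto (fun n => PY {ωy | ε ≤ |SYhat n ωy j k - SY j k|})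
        Filter.atTop (nhds 0))
    -- 1 − α̃/2 is the √(1−α)-quantile of the distribution of Φ(max_j |(D_X W)_j|)
    (αt : ℝ)
    (hαt : 1 - αt / 2 = quantileOf
      (νX.map (fun w => stdNormalCDF (⨆ j, |w j / Real.sqrt (SX j j)|)))
      (Real.sqrt (1 - α)))
    -- 1 − β̃/2 is the √(1−α)-quantile of the distribution of Φ(max_j |(D_Y M)_j|)
    (βt : ℝ)
    (hβt : 1 - βt / 2 = quantileOf
      (νY.map (fun w => stdNormalCDF (⨆ j, |w j / Real.sqrt (SY j j)|)))
      (Real.sqrt (1 - α))) :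
    1 - α ≤ Filter.liminf
      (fun nm : ℕ × ℕ =>
        ((PX.prod PY) {ω : ΩX × ΩY |
          {p : ℝ × ℝ | ∃ j k : Fin (J - 1), j < k ∧
            p.1 ∈ Set.Ioc
              (FXhat nm.1 ω.1 j + zq (1 - αt / 2) * Real.sqrt (SXhat nm.1 ω.1 j j / nm.1))
              (FYhat nm.2 ω.2 j - zq (1 - βt / 2) * Real.sqrt (SYhat nm.2 ω.2 j j / nm.2)) ∧
            p.2 ∈ Set.Ioc
              (FYhat nm.2 ω.2 k + zq (1 - βt / 2) * Real.sqrt (SYhat nm.2 ω.2 k k / nm.2))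
              (FXhat nm.1 ω.1 k - zq (1 - αt / 2) * Real.sqrt (SXhat nm.1 ω.1 k k / nm.1))} ⊆
          {p : ℝ × ℝ | ∃ j k : Fin (J - 1), j < k ∧
            p.1 ∈ Set.Ioc (FX j) (FY j) ∧ p.2 ∈ Set.Ioc (FY k) (FX k)}}).toReal)
      Filter.atTop := by
  obtain ⟨hα0, hα1⟩ := hα
  have hd : 0 < J - 1 := by omega
  set s := Real.sqrt (1 - α) with hsdef
  have hs : s ∈ Set.Ioo (0:ℝ) 1 := by
    refine ⟨Real.sqrt_pos.2 (by linarith), ?_⟩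
    have h1 : Real.sqrt (1 - α) < Real.sqrt 1 := Real.sqrt_lt_sqrt (by linarith) (by linarith)
    simpa [hsdef] using h1
  have hX : ∀ r < s, ∀ᶠ n in atTop, r ≤ (PX {ωx | ∀ j,
      |FXhat n ωx j - FX j| ≤ zq (1 - αt / 2) * Real.sqrt (SXhat n ωx j j / n)}).toReal :=
    fun r hr => onesample PX hd FX FXhat hFXhatMeas SX hSXdiag νX hνX hXconv SXhat
      hSXhat hs hαt hr
  have hY : ∀ r < s, ∀ᶠ n in atTop, r ≤ (PY {ωy | ∀ j,
      |FYhat n ωy j - FY j| ≤ zq (1 - βt / 2) * Real.sqrt (SYhat n ωy j j / n)}).toReal :=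
    fun r hr => onesample PY hd FY FYhat hFYhatMeas SY hSYdiag νY hνY hYconv SYhat
      hSYhat hs hβt hr
  have key : ∀ r : ℝ, r < 1 - α →
      r ≤ Filter.liminf (fun nm : ℕ × ℕ => ((PX.prod PY) {ω : ΩX × ΩY |
          {p : ℝ × ℝ | ∃ j k : Fin (J - 1), j < k ∧
            p.1 ∈ Set.Ioc
              (FXhat nm.1 ω.1 j + zq (1 - αt / 2) * Real.sqrt (SXhat nm.1 ω.1 j j / nm.1))
              (FYhat nm.2 ω.2 j - zq (1 - βt / 2) * Real.sqrt (SYhat nm.2 ω.2 j j / nm.2)) ∧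
            p.2 ∈ Set.Ioc
              (FYhat nm.2 ω.2 k + zq (1 - βt / 2) * Real.sqrt (SYhat nm.2 ω.2 k k / nm.2))
              (FXhat nm.1 ω.1 k - zq (1 - αt / 2) * Real.sqrt (SXhat nm.1 ω.1 k k / nm.1))} ⊆
          {p : ℝ × ℝ | ∃ j k : Fin (J - 1), j < k ∧
            p.1 ∈ Set.Ioc (FX j) (FY j) ∧ p.2 ∈ Set.Ioc (FY k) (FX k)}}).toReal) Filter.atTop := by
    intro r hr
    have hcob : IsCoboundedUnder (· ≥ ·) (atTop : Filter (ℕ × ℕ))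
        (fun nm : ℕ × ℕ => ((PX.prod PY) {ω : ΩX × ΩY |
          {p : ℝ × ℝ | ∃ j k : Fin (J - 1), j < k ∧
            p.1 ∈ Set.Ioc
              (FXhat nm.1 ω.1 j + zq (1 - αt / 2) * Real.sqrt (SXhat nm.1 ω.1 j j / nm.1))
              (FYhat nm.2 ω.2 j - zq (1 - βt / 2) * Real.sqrt (SYhat nm.2 ω.2 j j / nm.2)) ∧
            p.2 ∈ Set.Ioc
              (FYhat nm.2 ω.2 k + zq (1 - βt / 2) * Real.sqrt (SYhat nm.2 ω.2 k k / nm.2))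
              (FXhat nm.1 ω.1 k - zq (1 - αt / 2) * Real.sqrt (SXhat nm.1 ω.1 k k / nm.1))} ⊆
          {p : ℝ × ℝ | ∃ j k : Fin (J - 1), j < k ∧
            p.1 ∈ Set.Ioc (FX j) (FY j) ∧ p.2 ∈ Set.Ioc (FY k) (FX k)}}).toReal) :=
      IsBoundedUnder.isCoboundedUnder_ge (isBoundedUnder_of
        ⟨1, fun nm => by simpa using ENNReal.toReal_mono ENNReal.one_ne_top prob_le_one⟩)
    rcases le_or_gt r 0 with hr0 | hr0
    · exact hr0.trans (le_liminf_of_le hcob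
        (Eventually.of_forall fun nm => ENNReal.toReal_nonneg))
    · set u := (Real.sqrt r + s) / 2 with hudef
      have hru : Real.sqrt r < s := by
        rw [hsdef]
        exact Real.sqrt_lt_sqrt hr0.le (by linarith)
      have hu0 : 0 ≤ u := by
        rw [hudef]
        have := Real.sqrt_nonneg r
        linarith [hs.1]
      have hus : u < s := by rw [hudef]; linarith
      have hru2 : r < u ^ 2 := by
        have h1 : Real.sqrt r < u := by rw [hudef]; linarith
        nlinarith [Real.sqrt_nonneg r, Real.sq_sqrt hr0.le]
      refine le_liminf_of_le hcob ?_
      rw [← prod_atTop_atTop_eq]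
      filter_upwards [(hX u hus).prod_inl atTop, (hY u hus).prod_inr atTop] with nm h1 h2
      have hsubset : ({ωx : ΩX | ∀ j, |FXhat nm.1 ωx j - FX j|
            ≤ zq (1 - αt / 2) * Real.sqrt (SXhat nm.1 ωx j j / nm.1)} ×ˢ
          {ωy : ΩY | ∀ j, |FYhat nm.2 ωy j - FY j|
            ≤ zq (1 - βt / 2) * Real.sqrt (SYhat nm.2 ωy j j / nm.2)}) ⊆ {ω : ΩX × ΩY |
          {p : ℝ × ℝ | ∃ j k : Fin (J - 1), j < k ∧
            p.1 ∈ Set.Ioc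
              (FXhat nm.1 ω.1 j + zq (1 - αt / 2) * Real.sqrt (SXhat nm.1 ω.1 j j / nm.1))
              (FYhat nm.2 ω.2 j - zq (1 - βt / 2) * Real.sqrt (SYhat nm.2 ω.2 j j / nm.2)) ∧
            p.2 ∈ Set.Ioc
              (FYhat nm.2 ω.2 k + zq (1 - βt / 2) * Real.sqrt (SYhat nm.2 ω.2 k k / nm.2))
              (FXhat nm.1 ω.1 k - zq (1 - αt / 2) * Real.sqrt (SXhat nm.1 ω.1 k k / nm.1))} ⊆
          {p : ℝ × ℝ | ∃ j k : Fin (J - 1), j < k ∧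
            p.1 ∈ Set.Ioc (FX j) (FY j) ∧ p.2 ∈ Set.Ioc (FY k) (FX k)}} := by
        rintro ⟨ωx, ωy⟩ ⟨hx, hy⟩ p hp
        obtain ⟨j, k, hjk, hp1, hp2⟩ := hp
        have hxj := abs_le.1 (hx j)
        have hxk := abs_le.1 (hx k)
        have hyj := abs_le.1 (hy j)
        have hyk := abs_le.1 (hy k)
        refine ⟨j, k, hjk, ⟨?_, ?_⟩, ⟨?_, ?_⟩⟩
        · exact lt_of_le_of_lt (by linarith [hxj.1] : FX j ≤ FXhat nm.1 ωx j
            + zq (1 - αt / 2) * Real.sqrt (SXhat nm.1 ωx j j / nm.1)) hp1.1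
        · exact le_trans hp1.2 (by linarith [hyj.2])
        · exact lt_of_le_of_lt (by linarith [hyk.1] : FY k ≤ FYhat nm.2 ωy k
            + zq (1 - βt / 2) * Real.sqrt (SYhat nm.2 ωy k k / nm.2)) hp2.1
        · exact le_trans hp2.2 (by linarith [hxk.2])
      have hprod := Measure.prod_prod (μ := PX) (ν := PY)
        ({ωx : ΩX | ∀ j, |FXhat nm.1 ωx j - FX j|
            ≤ zq (1 - αt / 2) * Real.sqrt (SXhat nm.1 ωx j j / nm.1)})
        ({ωy : ΩY | ∀ j, |FYhat nm.2 ωy j - FY j|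
            ≤ zq (1 - βt / 2) * Real.sqrt (SYhat nm.2 ωy j j / nm.2)})
      calc r ≤ u * u := by nlinarith
        _ ≤ (PX {ωx : ΩX | ∀ j, |FXhat nm.1 ωx j - FX j|
              ≤ zq (1 - αt / 2) * Real.sqrt (SXhat nm.1 ωx j j / nm.1)}).toReal
            * (PY {ωy : ΩY | ∀ j, |FYhat nm.2 ωy j - FY j|
              ≤ zq (1 - βt / 2) * Real.sqrt (SYhat nm.2 ωy j j / nm.2)}).toReal :=
          mul_le_mul h1 h2 hu0 (le_trans hu0 h1)
        _ = ((PX.prod PY) (_ ×ˢ _)).toReal := by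
            rw [hprod, ENNReal.toReal_mul]
        _ ≤ ((PX.prod PY) {ω : ΩX × ΩY |
          {p : ℝ × ℝ | ∃ j k : Fin (J - 1), j < k ∧
            p.1 ∈ Set.Ioc
              (FXhat nm.1 ω.1 j + zq (1 - αt / 2) * Real.sqrt (SXhat nm.1 ω.1 j j / nm.1))
              (FYhat nm.2 ω.2 j - zq (1 - βt / 2) * Real.sqrt (SYhat nm.2 ω.2 j j / nm.2)) ∧
            p.2 ∈ Set.Ioc
              (FYhat nm.2 ω.2 k + zq (1 - βt / 2) * Real.sqrt (SYhat nm.2 ω.2 k k / nm.2))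
              (FXhat nm.1 ω.1 k - zq (1 - αt / 2) * Real.sqrt (SXhat nm.1 ω.1 k k / nm.1))} ⊆
          {p : ℝ × ℝ | ∃ j k : Fin (J - 1), j < k ∧
            p.1 ∈ Set.Ioc (FX j) (FY j) ∧ p.2 ∈ Set.Ioc (FY k) (FX k)}}).toReal :=
          ENNReal.toReal_mono (measure_ne_top _ _) (measure_mono hsubset)
  refine le_of_forall_pos_le_add fun ε hε => ?_
  have := key (1 - α - ε) (by linarith)
  linarith
end
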